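/- arXiv:2412.07151 — 6 statements merged into one kernel-verified Lean document; each statement's English description precedes it below -/
import Mathlib

section
/- Let n ≥ 1, let x : Fin n → ℝ be a sequence of n real values, and let H ⊆ Fin n be a nonempty set of 'honest' indices such that the number of remaining ('Byzantine') indices f = n − |H| satisfies f ≤ ⌈n/2⌉ − 1. If m ∈ ℝ is a median of the sequence, in the sense that #{i : x i ≤ m} ≥ ⌈n/2⌉ and #{i : x i ≥ m} ≥ ⌈n/2⌉, then min_{i ∈ H} x i ≤ m ≤ max_{i ∈ H} x i. -/
/-! Since the Byzantine values number fewer than ⌈n/2⌉, each of the two halves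
`{i | x i ≤ m}` and `{i | m ≤ x i}` guaranteed by the median contains an honest index;
the first bounds the honest minimum from above, the second the honest maximum from below. -/

open Finset

theorem Finset.inter_nonempty_of_card_sub_card_lt {α : Type*} [Fintype α] [DecidableEq α]
    {s t : Finset α} (h : Fintype.card α - #t < #s) : (s ∩ t).Nonempty :=
  inter_nonempty_of_card_lt_card_add_card (subset_univ s) (subset_univ t) <| by
    have := card_le_univ t
    rw [card_univ]
    omega

theorem median_between_honest_min_max_general
    (n : ℕ) (x : Fin n → ℝ)
    (H : Finset (Fin n)) (hH : H.Nonempty)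
    (hf : n - H.card ≤ (n + 1) / 2 - 1)
    (m : ℝ)
    (hle : (n + 1) / 2 ≤ (Finset.univ.filter (fun i => x i ≤ m)).card)
    (hge : (n + 1) / 2 ≤ (Finset.univ.filter (fun i => m ≤ x i)).card) :
    H.inf' hH x ≤ m ∧ m ≤ H.sup' hH x := by
  have hByz : Fintype.card (Fin n) - #H < (n + 1) / 2 := by
    have := hH.card_pos
    have := card_le_univ H
    rw [Fintype.card_fin] at *
    omega
  obtain ⟨i, hi⟩ := inter_nonempty_of_card_sub_card_lt (hByz.trans_le hle)
  obtain ⟨j, hj⟩ := inter_nonempty_of_card_sub_card_lt (hByz.trans_le hge)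
  rw [mem_inter, mem_filter] at hi hj
  exact ⟨inf'_le_of_le x hi.2 hi.1.2, le_sup'_of_le x hj.2 hj.1.2⟩

/-- A median of a sequence with a dominating honest subset lies between
the minimum and the maximum of the honest values. -/
theorem median_between_honest_min_max
    (n : ℕ) (hn : 1 ≤ n) (x : Fin n → ℝ)
    (H : Finset (Fin n)) (hH : H.Nonempty)
    (hf : n - H.card ≤ (n + 1) / 2 - 1)
    (m : ℝ)
    (hle : (n + 1) / 2 ≤ (Finset.univ.filter (fun i => x i ≤ m)).card)
    (hge : (n + 1) / 2 ≤ (Finset.univ.filter (fun i => m ≤ x i)).card) :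
    H.inf' hH x ≤ m ∧ m ≤ H.sup' hH x :=
  median_between_honest_min_max_general n x H hH hf m hle hge
end

section
/- Let n ≥ 1, let x : Fin n → EuclideanSpace ℝ (Fin d) be n vectors, and let H ⊆ Fin n be a nonempty set of honest indices with f = n − |H| ≤ ⌈n/2⌉ − 1. If m ∈ EuclideanSpace ℝ (Fin d) is a coordinate-wise median, i.e. for every coordinate j, #{i : (x i) j ≤ m j} ≥ ⌈n/2⌉ and #{i : (x i) j ≥ m j} ≥ ⌈n/2⌉, then for every coordinate j one has min_{i ∈ H} (x i) j ≤ m j ≤ max_{i ∈ H} (x i) j. -/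
/-!
The honest indices outnumber the Byzantine ones by enough that every set of at least `⌈n/2⌉`
indices contains an honest one. Applied in coordinate `j` to the indices lying below, resp. above,
the median, this yields honest values `x i j ≤ m j` and `m j ≤ x i' j`.
-/

open Finset

section

variable {ι α : Type*} [Fintype ι] [LinearOrder α] {H : Finset ι} (hH : H.Nonempty) {y : ι → α}
  {c : α}

theorem Finset.inf'_le_of_card_lt_card_filter_le_add_card
    (h : Fintype.card ι < #{i | y i ≤ c} + #H) : H.inf' hH y ≤ c := by
  classical
  obtain ⟨i, hi⟩ := inter_nonempty_of_card_lt_card_add_card (subset_univ {i | y i ≤ c})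
    (subset_univ H) (by rwa [card_univ])
  rw [mem_inter, mem_filter] at hi
  exact (inf'_le y hi.2).trans hi.1.2

theorem Finset.le_sup'_of_card_lt_card_filter_ge_add_card
    (h : Fintype.card ι < #{i | c ≤ y i} + #H) : c ≤ H.sup' hH y := by
  classical
  obtain ⟨i, hi⟩ := inter_nonempty_of_card_lt_card_add_card (subset_univ {i | c ≤ y i})
    (subset_univ H) (by rwa [card_univ])
  rw [mem_inter, mem_filter] at hi
  exact hi.1.2.trans (le_sup' y hi.2)

end

theorem coordinatewise_median_between_honest_min_max_general
    (d n : ℕ) (x : Fin n → EuclideanSpace ℝ (Fin d))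
    (H : Finset (Fin n)) (hH : H.Nonempty)
    (hf : n - H.card ≤ (n + 1) / 2 - 1)
    (m : EuclideanSpace ℝ (Fin d))
    (hmed : ∀ j : Fin d,
      (n + 1) / 2 ≤ (Finset.univ.filter (fun i => x i j ≤ m j)).card ∧
      (n + 1) / 2 ≤ (Finset.univ.filter (fun i => m j ≤ x i j)).card) :
    ∀ j : Fin d,
      H.inf' hH (fun i => x i j) ≤ m j ∧ m j ≤ H.sup' hH (fun i => x i j) := by
  intro j
  have hHpos := hH.card_pos
  have majority {k : ℕ} (hk : (n + 1) / 2 ≤ k) : Fintype.card (Fin n) < k + #H := by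
    rw [Fintype.card_fin]
    omega
  exact ⟨inf'_le_of_card_lt_card_filter_le_add_card hH (majority (hmed j).1),
    le_sup'_of_card_lt_card_filter_ge_add_card hH (majority (hmed j).2)⟩

/-- A coordinate-wise median of vectors with a dominating honest subset
lies, in every coordinate, between the minimum and the maximum of the honest values. -/
theorem coordinatewise_median_between_honest_min_max
    (d n : ℕ) (hn : 1 ≤ n) (x : Fin n → EuclideanSpace ℝ (Fin d))
    (H : Finset (Fin n)) (hH : H.Nonempty)
    (hf : n - H.card ≤ (n + 1) / 2 - 1)
    (m : EuclideanSpace ℝ (Fin d))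
    (hmed : ∀ j : Fin d,
      (n + 1) / 2 ≤ (Finset.univ.filter (fun i => x i j ≤ m j)).card ∧
      (n + 1) / 2 ≤ (Finset.univ.filter (fun i => m j ≤ x i j)).card) :
    ∀ j : Fin d,
      H.inf' hH (fun i => x i j) ≤ m j ∧ m j ≤ H.sup' hH (fun i => x i j) :=
  coordinatewise_median_between_honest_min_max_general d n x H hH hf m hmed
end

section
/- Let (Ω, 𝓕, ℙ) be a probability space, let X₁, …, X_m and Y be square-integrable real random variables such that for each i, the pair (X_i, Y) is independent, E[X_i] = E[Y], and Var(X_i) = Var(Y) = σ². Let M be a real random variable such that almost surely min_i X_i ≤ M ≤ max_i X_i. Then E[(M − Y)²] ≤ 2 m σ². -/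
open MeasureTheory ProbabilityTheory

/-- Second-moment bound for a random value lying between coordinate
minimum and maximum of honest values (real-valued version, paper's eqs. 6-7). -/
theorem median_val_sq_dev_bound
    {Ω : Type*} [MeasureSpace Ω] [IsProbabilityMeasure (ℙ : Measure Ω)]
    (m : ℕ) (hm : 1 ≤ m) (X : Fin m → Ω → ℝ) (Y : Ω → ℝ) (σ : ℝ)
    (hX : ∀ i, MemLp (X i) 2 ℙ) (hY : MemLp Y 2 ℙ)
    (hind : ∀ i, IndepFun (X i) Y ℙ)
    (hmean : ∀ i, (∫ ω, X i ω ∂ℙ) = ∫ ω, Y ω ∂ℙ)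
    (hvarX : ∀ i, variance (X i) ℙ = σ ^ 2)
    (hvarY : variance Y ℙ = σ ^ 2)
    (M : Ω → ℝ)
    (hM : ∀ᵐ ω ∂ℙ, (⨅ i, X i ω) ≤ M ω ∧ M ω ≤ ⨆ i, X i ω) :
    (∫ ω, (M ω - Y ω) ^ 2 ∂ℙ) ≤ 2 * m * σ ^ 2 := by
  have hne : Nonempty (Fin m) := ⟨⟨0, hm⟩⟩
  -- each X i - Y is Memℒp 2
  have hXY : ∀ i, MemLp (fun ω => X i ω - Y ω) 2 ℙ := fun i => (hX i).sub hY
  have hint : ∀ i, Integrable (fun ω => (X i ω - Y ω) ^ 2) ℙ := fun i => (hXY i).integrable_sq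
  have hg : Integrable (fun ω => ∑ i, (X i ω - Y ω) ^ 2) ℙ :=
    integrable_finset_sum _ fun i _ => hint i
  -- pointwise bound
  have hpt : ∀ᵐ ω ∂ℙ, (M ω - Y ω) ^ 2 ≤ ∑ i, (X i ω - Y ω) ^ 2 := by
    filter_upwards [hM] with ω hω
    obtain ⟨i0, hi0⟩ := exists_eq_ciInf_of_finite (f := fun i => X i ω)
    obtain ⟨i1, hi1⟩ := exists_eq_ciSup_of_finite (f := fun i => X i ω)
    have h0 : X i0 ω ≤ M ω := by rw [hi0]; exact hω.1
    have h1 : M ω ≤ X i1 ω := by rw [hi1]; exact hω.2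
    have key : (M ω - Y ω) ^ 2 ≤ max ((X i0 ω - Y ω) ^ 2) ((X i1 ω - Y ω) ^ 2) := by
      rcases le_total (M ω - Y ω) 0 with ht | ht
      · exact le_max_of_le_left (by nlinarith)
      · exact le_max_of_le_right (by nlinarith)
    rcases max_cases ((X i0 ω - Y ω) ^ 2) ((X i1 ω - Y ω) ^ 2) with ⟨he, _⟩ | ⟨he, _⟩
    · rw [he] at key
      exact key.trans (Finset.single_le_sum (f := fun j => (X j ω - Y ω) ^ 2) (fun i _ => sq_nonneg _) (Finset.mem_univ i0))
    · rw [he] at key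
      exact key.trans (Finset.single_le_sum (f := fun j => (X j ω - Y ω) ^ 2) (fun i _ => sq_nonneg _) (Finset.mem_univ i1))
  have hnn : ∀ᵐ ω ∂ℙ, 0 ≤ (M ω - Y ω) ^ 2 :=
    Filter.Eventually.of_forall fun ω => sq_nonneg _
  have step1 : (∫ ω, (M ω - Y ω) ^ 2 ∂ℙ) ≤ ∫ ω, ∑ i, (X i ω - Y ω) ^ 2 ∂ℙ :=
    integral_mono_of_nonneg hnn hg hpt
  -- compute ∫ (X i - Y)^2 = 2 σ^2
  have hcomp : ∀ i, (∫ ω, (X i ω - Y ω) ^ 2 ∂ℙ) = 2 * σ ^ 2 := by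
    intro i
    have hmean0 : (∫ ω, (X i ω - Y ω) ∂ℙ) = 0 := by
      rw [integral_sub ((hX i).integrable one_le_two) (hY.integrable one_le_two), hmean i,
        sub_self]
    have hv : variance (fun ω => X i ω - Y ω) ℙ = 2 * σ ^ 2 := by
      have hsub : (fun ω => X i ω - Y ω) = X i + -Y := by
        funext ω; simp [sub_eq_add_neg]
      have hvneg : variance (-Y) ℙ = σ ^ 2 := by
        have := variance_smul (-1 : ℝ) Y (ℙ : Measure Ω)
        simpa [hvarY] using this
      rw [hsub, IndepFun.variance_add (hX i) hY.neg (hind i).neg_right, hvarX i, hvneg]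
      ring
    have := variance_eq_sub (hXY i)
    rw [hv] at this
    simp only [Pi.pow_apply, hmean0] at this
    linarith [this]
  have step2 : (∫ ω, ∑ i, (X i ω - Y ω) ^ 2 ∂ℙ) = 2 * m * σ ^ 2 := by
    rw [integral_finset_sum _ fun i _ => hint i]
    simp only [hcomp, Finset.sum_const, Finset.card_univ, Fintype.card_fin, nsmul_eq_mul]
    ring
  linarith [step1, step2.le, step2.ge]
end

section
/- Let (Ω, 𝓕, ℙ) be a probability space, let X₁, …, X_m and Y be square-integrable random vectors with values in EuclideanSpace ℝ (Fin d) such that for every i and every coordinate j, the real random variables (X_i) j and Y j are independent, E[(X_i) j] = E[Y j], and Var((X_i) j) = Var(Y j) = σ_j². Let M be a random vector such that almost surely, for every coordinate j, min_i (X_i) j ≤ M j ≤ max_i (X_i) j. Then E[‖M − Y‖²] ≤ 2 m ∑_{j=1}^{d} σ_j². -/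
open MeasureTheory ProbabilityTheory

/-- Second-moment bound for a random vector lying coordinate-wise between
the minimum and maximum of honest random vectors (paper's eq. 8). -/
theorem median_vector_sq_dev_bound
    {Ω : Type*} [MeasureSpace Ω] [IsProbabilityMeasure (ℙ : Measure Ω)]
    (d m : ℕ) (hm : 1 ≤ m)
    (X : Fin m → Ω → EuclideanSpace ℝ (Fin d)) (Y : Ω → EuclideanSpace ℝ (Fin d))
    (σ : Fin d → ℝ)
    (hX : ∀ i, MemLp (X i) 2 ℙ) (hY : MemLp Y 2 ℙ)
    (hind : ∀ i, ∀ j : Fin d, IndepFun (fun ω => X i ω j) (fun ω => Y ω j) ℙ)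
    (hmean : ∀ i, ∀ j : Fin d, (∫ ω, X i ω j ∂ℙ) = ∫ ω, Y ω j ∂ℙ)
    (hvarX : ∀ i, ∀ j : Fin d, variance (fun ω => X i ω j) ℙ = σ j ^ 2)
    (hvarY : ∀ j : Fin d, variance (fun ω => Y ω j) ℙ = σ j ^ 2)
    (M : Ω → EuclideanSpace ℝ (Fin d))
    (hM : ∀ᵐ ω ∂ℙ, ∀ j : Fin d, (⨅ i, X i ω j) ≤ M ω j ∧ M ω j ≤ ⨆ i, X i ω j) :
    (∫ ω, ‖M ω - Y ω‖ ^ 2 ∂ℙ) ≤ 2 * m * ∑ j : Fin d, σ j ^ 2 := by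
  haveI : Nonempty (Fin m) := ⟨⟨0, hm⟩⟩
  have hσ : ∀ j, 0 ≤ σ j ^ 2 := fun j => (hvarY j) ▸ variance_nonneg _ _
  have hRHS : 0 ≤ 2 * m * ∑ j : Fin d, σ j ^ 2 := by
    apply mul_nonneg (by positivity)
    exact Finset.sum_nonneg fun j _ => hσ j
  -- coordinates are in L²
  have hXc : ∀ i (j : Fin d), MemLp (fun ω => X i ω j) 2 ℙ := fun i j =>
    (EuclideanSpace.proj (𝕜 := ℝ) j).comp_memLp' (hX i)
  have hYc : ∀ j : Fin d, MemLp (fun ω => Y ω j) 2 ℙ := fun j =>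
    (EuclideanSpace.proj (𝕜 := ℝ) j).comp_memLp' hY
  have hD : ∀ i (j : Fin d), MemLp (fun ω => X i ω j - Y ω j) 2 ℙ := fun i j =>
    (hXc i j).sub (hYc j)
  -- expectation of each squared difference
  have hEsq : ∀ i (j : Fin d), (∫ ω, (X i ω j - Y ω j) ^ 2 ∂ℙ) = 2 * σ j ^ 2 := by
    intro i j
    have hnegY : variance (fun ω => -(Y ω j)) ℙ = σ j ^ 2 := by
      have h1 := variance_smul (-1 : ℝ) (fun ω => Y ω j) ℙ
      simp only [neg_smul, one_smul, neg_neg, neg_one_sq, one_mul] at h1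
      have h2 : (fun ω => -(Y ω j)) = -(fun ω => Y ω j) := rfl
      rw [h2, h1, hvarY j]
    have hvar : variance (fun ω => X i ω j - Y ω j) ℙ = 2 * σ j ^ 2 := by
      have h2 : (fun ω => X i ω j - Y ω j)
          = (fun ω => X i ω j) + fun ω => -(Y ω j) := by
        funext ω; simp [sub_eq_add_neg]
      have hnY : MemLp (fun ω => -Y ω j) 2 ℙ := (hYc j).neg
      have hiN : IndepFun (fun ω => X i ω j) (fun ω => -Y ω j) ℙ := (hind i j).neg_right
      rw [h2, IndepFun.variance_add (hXc i j) hnY hiN, hvarX i j, hnegY]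
      ring
    have hmean0 : (∫ ω, (X i ω j - Y ω j) ∂ℙ) = 0 := by
      rw [integral_sub ((hXc i j).integrable one_le_two) ((hYc j).integrable one_le_two),
        hmean i j, sub_self]
    have hdef := variance_eq_sub (hD i j)
    simp only [Pi.pow_apply] at hdef
    rw [hmean0] at hdef
    simp at hdef
    linarith [hdef, hvar]
  -- integrability of the dominating function
  have hg : Integrable (fun ω => ∑ j : Fin d, ∑ i : Fin m, (X i ω j - Y ω j) ^ 2) ℙ :=
    integrable_finset_sum _ fun j _ => integrable_finset_sum _ fun i _ => (hD i j).integrable_sq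
  -- a.e. pointwise bound
  have hae : ∀ᵐ ω ∂ℙ, ‖M ω - Y ω‖ ^ 2 ≤ ∑ j : Fin d, ∑ i : Fin m, (X i ω j - Y ω j) ^ 2 := by
    filter_upwards [hM] with ω h
    have hnorm : ‖M ω - Y ω‖ ^ 2 = ∑ j : Fin d, (M ω j - Y ω j) ^ 2 := by
      rw [EuclideanSpace.norm_eq]
      rw [Real.sq_sqrt (Finset.sum_nonneg fun j _ => sq_nonneg _)]
      congr 1; funext j
      simp [Real.norm_eq_abs, sq_abs]
    rw [hnorm]
    apply Finset.sum_le_sum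
    intro j _
    obtain ⟨i₀, hi₀⟩ := Finite.exists_min (fun i => X i ω j)
    obtain ⟨i₁, hi₁⟩ := Finite.exists_max (fun i => X i ω j)
    have hlow : X i₀ ω j ≤ M ω j := le_trans (le_ciInf hi₀) (h j).1
    have hhigh : M ω j ≤ X i₁ ω j := le_trans (h j).2 (ciSup_le hi₁)
    have habs : |M ω j - Y ω j| ≤ max |X i₀ ω j - Y ω j| |X i₁ ω j - Y ω j| :=
      abs_le_max_abs_abs (by linarith) (by linarith)
    rcases le_total |X i₀ ω j - Y ω j| |X i₁ ω j - Y ω j| with hc | hc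
    · calc (M ω j - Y ω j) ^ 2 = |M ω j - Y ω j| ^ 2 := (sq_abs _).symm
        _ ≤ |X i₁ ω j - Y ω j| ^ 2 := by
            apply pow_le_pow_left₀ (abs_nonneg _)
            exact habs.trans_eq (max_eq_right hc)
        _ = (X i₁ ω j - Y ω j) ^ 2 := sq_abs _
        _ ≤ ∑ i : Fin m, (X i ω j - Y ω j) ^ 2 :=
            Finset.single_le_sum (f := fun i => (X i ω j - Y ω j) ^ 2)
              (fun i _ => sq_nonneg _) (Finset.mem_univ i₁)
    · calc (M ω j - Y ω j) ^ 2 = |M ω j - Y ω j| ^ 2 := (sq_abs _).symm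
        _ ≤ |X i₀ ω j - Y ω j| ^ 2 := by
            apply pow_le_pow_left₀ (abs_nonneg _)
            exact habs.trans_eq (max_eq_left hc)
        _ = (X i₀ ω j - Y ω j) ^ 2 := sq_abs _
        _ ≤ ∑ i : Fin m, (X i ω j - Y ω j) ^ 2 :=
            Finset.single_le_sum (f := fun i => (X i ω j - Y ω j) ^ 2)
              (fun i _ => sq_nonneg _) (Finset.mem_univ i₀)
  by_cases hInt : Integrable (fun ω => ‖M ω - Y ω‖ ^ 2) ℙ
  · calc (∫ ω, ‖M ω - Y ω‖ ^ 2 ∂ℙ)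
        ≤ ∫ ω, ∑ j : Fin d, ∑ i : Fin m, (X i ω j - Y ω j) ^ 2 ∂ℙ :=
          integral_mono_ae hInt hg hae
      _ = ∑ j : Fin d, ∑ i : Fin m, ∫ ω, (X i ω j - Y ω j) ^ 2 ∂ℙ := by
          rw [integral_finset_sum _ fun j _ =>
            integrable_finset_sum _ fun i _ => (hD i j).integrable_sq]
          exact Finset.sum_congr rfl fun j _ =>
            integral_finset_sum _ fun i _ => (hD i j).integrable_sq
      _ = ∑ j : Fin d, ∑ _i : Fin m, 2 * σ j ^ 2 :=
          Finset.sum_congr rfl fun j _ => Finset.sum_congr rfl fun i _ => hEsq i j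
      _ = 2 * m * ∑ j : Fin d, σ j ^ 2 := by
          simp only [Finset.sum_const, Finset.card_univ, Fintype.card_fin, nsmul_eq_mul,
            Finset.mul_sum]
          exact Finset.sum_congr rfl fun j _ => by ring
  · rw [integral_undef hInt]
    exact hRHS
end

section
/- Let x₁, …, x_m, y, z be vectors in EuclideanSpace ℝ (Fin d) with m ≥ 1, and suppose that for every coordinate j, min_i (x_i) j ≤ z j ≤ max_i (x_i) j. Then ‖z − y‖² ≤ ∑_{i=1}^{m} ‖x_i − y‖². -/
/-!
Coordinatewise, `z j` lies between the smallest and the largest of the `x i j`, both of which are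
attained, so `|z j - y j|` is at most `|x i j - y j|` for one of the two extremal indices `i`; hence
`(z j - y j) ^ 2` is bounded by the sum over all `i`. Summing over `j` gives the squared norms.
-/

open Set

theorem exists_abs_sub_le_of_mem_Icc_ciInf_ciSup {ι α : Type*} [Finite ι] [Nonempty ι]
    [ConditionallyCompleteLinearOrder α] [AddCommGroup α] [IsOrderedAddMonoid α]
    {f : ι → α} {t : α} (ht : t ∈ Icc (⨅ i, f i) (⨆ i, f i)) (c : α) :
    ∃ i, |t - c| ≤ |f i - c| := by
  obtain ⟨imin, himin⟩ := exists_eq_ciInf_of_finite (f := f)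
  obtain ⟨imax, himax⟩ := exists_eq_ciSup_of_finite (f := f)
  rw [← himin, ← himax] at ht
  have h := abs_le_max_abs_abs (sub_le_sub_right ht.1 c) (sub_le_sub_right ht.2 c)
  rcases le_total |f imin - c| |f imax - c| with hle | hle
  · exact ⟨imax, h.trans (max_le hle le_rfl)⟩
  · exact ⟨imin, h.trans (max_le le_rfl hle)⟩

theorem sq_sub_le_sum_sq_sub_of_mem_Icc_ciInf_ciSup {ι : Type*} [Fintype ι] [Nonempty ι]
    {f : ι → ℝ} {t : ℝ} (ht : t ∈ Icc (⨅ i, f i) (⨆ i, f i)) (c : ℝ) :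
    (t - c) ^ 2 ≤ ∑ i, (f i - c) ^ 2 := by
  obtain ⟨i, hi⟩ := exists_abs_sub_le_of_mem_Icc_ciInf_ciSup ht c
  calc (t - c) ^ 2 ≤ (f i - c) ^ 2 := sq_le_sq.mpr hi
    _ ≤ ∑ i, (f i - c) ^ 2 :=
      Finset.single_le_sum (fun i _ => sq_nonneg (f i - c)) (Finset.mem_univ i)

theorem EuclideanSpace.norm_sq_le_sum_norm_sq_of_forall_sq_le {ι κ : Type*} [Fintype ι]
    [Fintype κ] {v : EuclideanSpace ℝ ι} {w : κ → EuclideanSpace ℝ ι}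
    (h : ∀ j, v j ^ 2 ≤ ∑ i, w i j ^ 2) :
    ‖v‖ ^ 2 ≤ ∑ i, ‖w i‖ ^ 2 := by
  simp only [EuclideanSpace.real_norm_sq_eq]
  rw [Finset.sum_comm]
  exact Finset.sum_le_sum fun j _ => h j

/-- Paper's eq. 14 — the squared distance of a coordinate-wise
intermediate vector `z` to `y` is bounded by the sum of squared distances of the
`x i` to `y`. -/
theorem coordinatewise_median_sq_dist_le_sum
    (d m : ℕ) (hm : 1 ≤ m)
    (x : Fin m → EuclideanSpace ℝ (Fin d)) (y z : EuclideanSpace ℝ (Fin d))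
    (hz : ∀ j : Fin d, (⨅ i, x i j) ≤ z j ∧ z j ≤ ⨆ i, x i j) :
    ‖z - y‖ ^ 2 ≤ ∑ i, ‖x i - y‖ ^ 2 := by
  have : Nonempty (Fin m) := ⟨⟨0, hm⟩⟩
  refine EuclideanSpace.norm_sq_le_sum_norm_sq_of_forall_sq_le fun j => ?_
  simpa only [PiLp.sub_apply] using sq_sub_le_sum_sq_sub_of_mem_Icc_ciInf_ciSup (hz j) (y j)
end

section
/- Let F : EuclideanSpace ℝ (Fin d) → ℝ be differentiable with gradient ∇F satisfying ‖∇F(θ₁) − ∇F(θ₂)‖ ≤ L ‖θ₁ − θ₂‖ for all θ₁, θ₂ and some L > 0. Let θ, g, v ∈ EuclideanSpace ℝ (Fin d), η ≥ 0, C ≥ 0 and D ≥ 0 with ‖g‖² ≤ C, and set θ' = θ − η g. If ‖∇F(θ') − v‖² ≤ D, then F(θ') ≤ F(θ) − η ⟨v, g⟩ + (L η² / 2 + L² η³ + η / 2) C + η D. -/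
open RealInnerProductSpace

set_option maxHeartbeats 1000000

/-- Descent lemma for functions with Lipschitz gradient. -/
lemma descent_lemma_aux
    (d : ℕ) (F : EuclideanSpace ℝ (Fin d) → ℝ) (L : ℝ) (hL : 0 ≤ L)
    (hdiff : Differentiable ℝ F)
    (hlip : ∀ θ₁ θ₂ : EuclideanSpace ℝ (Fin d),
      ‖gradient F θ₁ - gradient F θ₂‖ ≤ L * ‖θ₁ - θ₂‖)
    (x y : EuclideanSpace ℝ (Fin d)) :
    F y ≤ F x + ⟪gradient F x, y - x⟫ + L / 2 * ‖y - x‖ ^ 2 := by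
  set u := y - x with hu
  have hline : ∀ t : ℝ,
      HasDerivAt (fun s : ℝ => F (x + s • u)) ⟪gradient F (x + t • u), u⟫ t := by
    intro t
    have h1 : HasDerivAt (fun s : ℝ => x + s • u) u t := by
      simpa using ((hasDerivAt_id t).smul_const u).const_add x
    have h2 := (hdiff (x + t • u)).hasGradientAt.hasFDerivAt
    have h3 := h2.comp_hasDerivAt t h1
    simpa [InnerProductSpace.toDual_apply_apply, Function.comp_def] using h3
  have hgcont : Continuous (gradient F) := by
    have hlw : LipschitzWith (Real.toNNReal L) (gradient F) := by
      apply LipschitzWith.of_dist_le_mul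
      intro p q
      rw [dist_eq_norm, dist_eq_norm, Real.coe_toNNReal L hL]
      exact hlip p q
    exact hlw.continuous
  have hlinec : Continuous fun t : ℝ => x + t • u :=
    continuous_const.add (continuous_id.smul continuous_const)
  have hcont : Continuous fun t : ℝ => ⟪gradient F (x + t • u), u⟫ :=
    (hgcont.comp hlinec).inner continuous_const
  have key : F (x + (1:ℝ) • u) - F (x + (0:ℝ) • u)
      = ∫ t in (0:ℝ)..1, ⟪gradient F (x + t • u), u⟫ :=
    (intervalIntegral.integral_eq_sub_of_hasDerivAt (fun t _ => hline t)
      (hcont.intervalIntegrable 0 1)).symm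
  have hxy : F y - F x = ∫ t in (0:ℝ)..1, ⟪gradient F (x + t • u), u⟫ := by
    simpa [hu] using key
  have hmono : (∫ t in (0:ℝ)..1, ⟪gradient F (x + t • u), u⟫)
      ≤ ∫ t in (0:ℝ)..1, (⟪gradient F x, u⟫ + L * t * ‖u‖ ^ 2) := by
    apply intervalIntegral.integral_mono_on (by norm_num)
    · exact hcont.intervalIntegrable 0 1
    · exact (continuous_const.add ((continuous_const.mul continuous_id).mul
        continuous_const) : Continuous fun t : ℝ =>
        ⟪gradient F x, u⟫ + L * t * ‖u‖ ^ 2).intervalIntegrable 0 1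
    · intro t ht
      rcases Set.mem_Icc.mp ht with ⟨ht0, ht1⟩
      have h1 : ⟪gradient F (x + t • u), u⟫ - ⟪gradient F x, u⟫
          = ⟪gradient F (x + t • u) - gradient F x, u⟫ := by
        rw [inner_sub_left]
      have h2 : ⟪gradient F (x + t • u) - gradient F x, u⟫
          ≤ ‖gradient F (x + t • u) - gradient F x‖ * ‖u‖ :=
        real_inner_le_norm _ _
      have h3 : ‖gradient F (x + t • u) - gradient F x‖ ≤ L * (t * ‖u‖) := by
        have := hlip (x + t • u) x
        simpa [norm_smul, abs_of_nonneg ht0] using this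
      have h4 : ‖gradient F (x + t • u) - gradient F x‖ * ‖u‖
          ≤ L * (t * ‖u‖) * ‖u‖ :=
        mul_le_mul_of_nonneg_right h3 (norm_nonneg u)
      nlinarith [norm_nonneg u]
  have hint : (∫ t in (0:ℝ)..1, (⟪gradient F x, u⟫ + L * t * ‖u‖ ^ 2))
      = ⟪gradient F x, u⟫ + L / 2 * ‖u‖ ^ 2 := by
    rw [intervalIntegral.integral_add (intervalIntegrable_const)
      ((by fun_prop : Continuous fun t : ℝ => L * t * ‖u‖ ^ 2).intervalIntegrable 0 1)]
    have : (∫ t in (0:ℝ)..1, L * t * ‖u‖ ^ 2)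
        = L * ‖u‖ ^ 2 * ∫ t in (0:ℝ)..1, t := by
      rw [← intervalIntegral.integral_const_mul]
      congr 1; ext t; ring
    rw [this, integral_id]
    simp; ring
  have := hmono.trans_eq hint
  linarith [hxy ▸ this]

/-- Per-iteration loss bound in the paper's convergence analysis
(eqs. 26-27). -/
theorem per_iteration_loss_bound
    (d : ℕ) (F : EuclideanSpace ℝ (Fin d) → ℝ) (L : ℝ) (hL : 0 < L)
    (hdiff : Differentiable ℝ F)
    (hlip : ∀ θ₁ θ₂ : EuclideanSpace ℝ (Fin d),
      ‖gradient F θ₁ - gradient F θ₂‖ ≤ L * ‖θ₁ - θ₂‖)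
    (θ g v : EuclideanSpace ℝ (Fin d)) (η C D : ℝ)
    (hη : 0 ≤ η) (hC : 0 ≤ C) (hD : 0 ≤ D) (hg : ‖g‖ ^ 2 ≤ C)
    (θ' : EuclideanSpace ℝ (Fin d)) (hθ' : θ' = θ - η • g)
    (hv : ‖gradient F θ' - v‖ ^ 2 ≤ D) :
    F θ' ≤ F θ - η * ⟪v, g⟫ + (L * η ^ 2 / 2 + L ^ 2 * η ^ 3 + η / 2) * C + η * D := by
  have hdesc := descent_lemma_aux d F L hL.le hdiff hlip θ θ'
  have hsub : θ' - θ = -(η • g) := by rw [hθ']; abel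
  have hnorm : ‖θ' - θ‖ = η * ‖g‖ := by
    rw [hsub, norm_neg, norm_smul, Real.norm_eq_abs, abs_of_nonneg hη]
  have hinner : ⟪gradient F θ, θ' - θ⟫ = -(η * ⟪gradient F θ, g⟫) := by
    rw [hsub, inner_neg_right, real_inner_smul_right]
  have hdesc' : F θ' ≤ F θ - η * ⟪gradient F θ, g⟫ + L / 2 * (η * ‖g‖) ^ 2 := by
    rw [hinner, hnorm] at hdesc; linarith
  -- split the inner product
  have hsplit : ⟪gradient F θ, g⟫
      = ⟪v, g⟫ + ⟪gradient F θ - gradient F θ', g⟫ + ⟪gradient F θ' - v, g⟫ := by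
    rw [inner_sub_left, inner_sub_left]; ring
  -- bound the Lipschitz term
  have hb1 : -⟪gradient F θ - gradient F θ', g⟫ ≤ L * η * ‖g‖ ^ 2 := by
    have h1 : -⟪gradient F θ - gradient F θ', g⟫
        ≤ ‖gradient F θ - gradient F θ'‖ * ‖g‖ := by
      have := real_inner_le_norm (gradient F θ' - gradient F θ) g
      have heq : ⟪gradient F θ' - gradient F θ, g⟫ = -⟪gradient F θ - gradient F θ', g⟫ := by
        rw [← inner_neg_left]; congr 1; abel
      rw [heq] at this
      calc -⟪gradient F θ - gradient F θ', g⟫ ≤ ‖gradient F θ' - gradient F θ‖ * ‖g‖ := this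
        _ = ‖gradient F θ - gradient F θ'‖ * ‖g‖ := by rw [← norm_neg]; congr 1; abel
    have h2 : ‖gradient F θ - gradient F θ'‖ ≤ L * (η * ‖g‖) := by
      have := hlip θ θ'
      have : ‖gradient F θ - gradient F θ'‖ ≤ L * ‖θ' - θ‖ := by
        rw [← norm_neg (θ' - θ)]
        have : -(θ' - θ) = θ - θ' := by abel
        rw [this]; exact hlip θ θ'
      rwa [hnorm] at this
    calc -⟪gradient F θ - gradient F θ', g⟫ ≤ ‖gradient F θ - gradient F θ'‖ * ‖g‖ := h1
      _ ≤ L * (η * ‖g‖) * ‖g‖ :=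
        mul_le_mul_of_nonneg_right h2 (norm_nonneg g)
      _ = L * η * ‖g‖ ^ 2 := by ring
  -- bound the variance term
  have hb2 : -⟪gradient F θ' - v, g⟫ ≤ ‖gradient F θ' - v‖ ^ 2 + ‖g‖ ^ 2 / 4 := by
    have h1 : -⟪gradient F θ' - v, g⟫ ≤ ‖gradient F θ' - v‖ * ‖g‖ := by
      have := real_inner_le_norm (v - gradient F θ') g
      have heq : ⟪v - gradient F θ', g⟫ = -⟪gradient F θ' - v, g⟫ := by
        rw [← inner_neg_left]; congr 1; abel
      rw [heq] at this
      calc -⟪gradient F θ' - v, g⟫ ≤ ‖v - gradient F θ'‖ * ‖g‖ := this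
        _ = ‖gradient F θ' - v‖ * ‖g‖ := by rw [← norm_neg]; congr 1; abel
    nlinarith [sq_nonneg (‖gradient F θ' - v‖ - ‖g‖ / 2)]
  have hbg : (0:ℝ) ≤ ‖g‖ ^ 2 := sq_nonneg _
  have hamgm : 0 ≤ 4 * L ^ 2 * η ^ 3 - 4 * L * η ^ 2 + η := by
    have := sq_nonneg (2 * L * η - 1)
    nlinarith
  nlinarith [hdesc', hsplit, mul_le_mul_of_nonneg_left hb1 hη,
    mul_le_mul_of_nonneg_left hb2 hη, mul_le_mul_of_nonneg_left hg (mul_nonneg hL.le (sq_nonneg η)),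
    mul_le_mul_of_nonneg_left hv hη, mul_le_mul_of_nonneg_left hg hη,
    mul_le_mul_of_nonneg_left hg (mul_nonneg (mul_nonneg hL.le hL.le) (pow_nonneg hη 3))]
end
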